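/- For t > 1 define u(t,x) = x/(t−1) if 0 ≤ x ≤ (t−1)² and u(t,x) = t−1 if x ≥ (t−1)². Then: (a) at every point (t,x) with t > 1, x > 0 and x ≠ (t−1)², the function u is differentiable in t and x and satisfies ∂_t u(t,x) + 2·u(t,x)·∂_x u(t,x) = ∫₀^x (∂_x u(t,y))² dy; (b) for every t > 1, ∫₀^∞ (∂_x u(t,x))² dx = 1; (c) sup_{x ≥ 0} |u(t,x)| = t−1, so u(t,·) converges uniformly to 0 as t → 1⁺. In particular, this nonzero solution and the identically zero solution both emanate continuously from the zero state at time t = 1, while the nonzero one has constant energy 1. -/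

import Mathlib

/-!
Away from the kink `x = (t-1)²` the solution is smooth and both sides of the equation are explicit:
`u_x² = (t-1)⁻²` on `x < (t-1)²` and `0` beyond, so `∫₀^x u_x² = min x (t-1)² / (t-1)²`, which is
`x/(t-1)²` on the linear part and `1` on the flat part; the left-hand side gives the same
(`-x/(t-1)² + 2x/(t-1)²`, resp. `1 + 0`). The kink is a null set, so it does not affect the integrals,
and the energy is `(t-1)² · (t-1)⁻² = 1`. The value `|u|` increases to `t-1`, attained at the kink.
-/

open MeasureTheory Set Real Filter Topology

noncomputable def rampSolution (t x : ℝ) : ℝ :=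
  if x ≤ (t - 1) ^ 2 then x / (t - 1) else t - 1

section Derivatives

variable {t x : ℝ}

lemma hasDerivAt_rampSolution_space_of_lt (hx : x < (t - 1) ^ 2) :
    HasDerivAt (rampSolution t) (1 / (t - 1)) x := by
  refine (hasDerivAt_id x |>.div_const (t - 1)).congr_of_eventuallyEq ?_
  filter_upwards [Iio_mem_nhds hx] with z (hz : z < _)
  rw [rampSolution, if_pos hz.le, id]

lemma hasDerivAt_rampSolution_space_of_gt (hx : (t - 1) ^ 2 < x) :
    HasDerivAt (rampSolution t) 0 x := by
  refine (hasDerivAt_const x (t - 1)).congr_of_eventuallyEq ?_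
  filter_upwards [Ioi_mem_nhds hx] with z (hz : _ < z)
  rw [rampSolution, if_neg (not_le.mpr hz)]

lemma hasDerivAt_rampSolution_time_of_lt (ht : t ≠ 1) (hx : x < (t - 1) ^ 2) :
    HasDerivAt (fun s => rampSolution s x) (-x / (t - 1) ^ 2) t := by
  have hsub : HasDerivAt (fun s : ℝ => s - 1) 1 t := (hasDerivAt_id t).sub_const 1
  have hdiv := (hasDerivAt_const t x).fun_div hsub (sub_ne_zero.mpr ht)
  rw [zero_mul, zero_sub, mul_one] at hdiv
  refine hdiv.congr_of_eventuallyEq ?_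
  have hcont : ContinuousAt (fun s : ℝ => (s - 1) ^ 2) t := by fun_prop
  filter_upwards [hcont (Ioi_mem_nhds hx)] with s (hs : x < _)
  rw [rampSolution, if_pos hs.le]

lemma hasDerivAt_rampSolution_time_of_gt (hx : (t - 1) ^ 2 < x) :
    HasDerivAt (fun s => rampSolution s x) 1 t := by
  refine ((hasDerivAt_id t).sub_const 1).congr_of_eventuallyEq ?_
  have hcont : ContinuousAt (fun s : ℝ => (s - 1) ^ 2) t := by fun_prop
  filter_upwards [hcont (Iio_mem_nhds hx)] with s (hs : _ < x)
  rw [rampSolution, if_neg (not_le.mpr hs), id]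

end Derivatives

section Energy

variable {t : ℝ}

lemma deriv_rampSolution_sq_ae_eq :
    (fun y => deriv (rampSolution t) y ^ 2)
      =ᵐ[volume] (Iic ((t - 1) ^ 2)).indicator fun _ => 1 / (t - 1) ^ 2 := by
  filter_upwards [Measure.ae_ne volume ((t - 1) ^ 2)] with y hy
  rcases hy.lt_or_gt with hlt | hgt
  · rw [(hasDerivAt_rampSolution_space_of_lt hlt).deriv, Set.indicator_of_mem (mem_Iic.mpr hlt.le),
      div_pow, one_pow]
  · rw [(hasDerivAt_rampSolution_space_of_gt hgt).deriv,
      Set.indicator_of_notMem (notMem_Iic.mpr hgt)]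
    ring

lemma setIntegral_deriv_rampSolution_sq (s : Set ℝ) :
    ∫ y in s, deriv (rampSolution t) y ^ 2 = volume.real (s ∩ Iic ((t - 1) ^ 2)) / (t - 1) ^ 2 := by
  rw [integral_congr_ae (ae_restrict_of_ae deriv_rampSolution_sq_ae_eq),
    setIntegral_indicator measurableSet_Iic, setIntegral_const, smul_eq_mul, mul_one_div]

lemma intervalIntegral_deriv_rampSolution_sq {x : ℝ} (hx : 0 ≤ x) :
    ∫ y in (0 : ℝ)..x, deriv (rampSolution t) y ^ 2 = min x ((t - 1) ^ 2) / (t - 1) ^ 2 := by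
  rw [intervalIntegral.integral_of_le hx, setIntegral_deriv_rampSolution_sq (Ioc 0 x),
    Ioc_inter_Iic, Real.volume_real_Ioc_of_le (le_min hx (sq_nonneg _)), sub_zero]

lemma energy_rampSolution (ht : t ≠ 1) :
    ∫ y in Ioi (0 : ℝ), deriv (rampSolution t) y ^ 2 = 1 := by
  have hpos : 0 < (t - 1) ^ 2 := by positivity [sub_ne_zero.mpr ht]
  rw [setIntegral_deriv_rampSolution_sq (Ioi 0), Ioi_inter_Iic,
    Real.volume_real_Ioc_of_le hpos.le, sub_zero, div_self hpos.ne']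

end Energy

lemma rampSolution_solves {t x : ℝ} (ht : 1 < t) (hx : 0 < x) (hkink : x ≠ (t - 1) ^ 2) :
    DifferentiableAt ℝ (fun s => rampSolution s x) t ∧
      DifferentiableAt ℝ (rampSolution t) x ∧
      deriv (fun s => rampSolution s x) t + 2 * rampSolution t x * deriv (rampSolution t) x =
        ∫ y in (0 : ℝ)..x, deriv (rampSolution t) y ^ 2 := by
  have hc : t - 1 ≠ 0 := sub_ne_zero.mpr ht.ne'
  rw [intervalIntegral_deriv_rampSolution_sq hx.le]
  rcases hkink.lt_or_gt with hlt | hgt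
  · have hdt := hasDerivAt_rampSolution_time_of_lt ht.ne' hlt
    have hdx := hasDerivAt_rampSolution_space_of_lt hlt
    refine ⟨hdt.differentiableAt, hdx.differentiableAt, ?_⟩
    rw [hdt.deriv, hdx.deriv, rampSolution, if_pos hlt.le, min_eq_left hlt.le]
    field_simp
    ring
  · have hdt := hasDerivAt_rampSolution_time_of_gt hgt
    have hdx := hasDerivAt_rampSolution_space_of_gt hgt
    refine ⟨hdt.differentiableAt, hdx.differentiableAt, ?_⟩
    rw [hdt.deriv, hdx.deriv, min_eq_right hgt.le, div_self (pow_ne_zero 2 hc)]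
    ring

lemma isGreatest_abs_rampSolution {t : ℝ} (ht : 1 < t) :
    IsGreatest {r : ℝ | ∃ x : ℝ, 0 ≤ x ∧ r = |rampSolution t x|} (t - 1) := by
  have hc : 0 < t - 1 := sub_pos.mpr ht
  refine ⟨⟨(t - 1) ^ 2, sq_nonneg _, ?_⟩, ?_⟩
  · rw [rampSolution, if_pos le_rfl, sq, mul_div_cancel_right₀ _ hc.ne', abs_of_pos hc]
  · rintro r ⟨x, hx, rfl⟩
    unfold rampSolution
    split_ifs with hle
    · rw [abs_of_nonneg (div_nonneg hx hc.le), div_le_iff₀ hc]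
      nlinarith
    · rw [abs_of_pos hc]

theorem stmt16 (u : ℝ → ℝ → ℝ)
    (hu : ∀ t x : ℝ, u t x = if x ≤ (t - 1) ^ 2 then x / (t - 1) else t - 1) :
    (∀ t x : ℝ, 1 < t → 0 < x → x ≠ (t - 1) ^ 2 →
      DifferentiableAt ℝ (fun s => u s x) t ∧
      DifferentiableAt ℝ (fun z => u t z) x ∧
      deriv (fun s => u s x) t + 2 * u t x * deriv (fun z => u t z) x =
        ∫ y in (0:ℝ)..x, (deriv (fun z => u t z) y) ^ 2) ∧
    (∀ t : ℝ, 1 < t →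
      ∫ x in Set.Ioi (0:ℝ), (deriv (fun z => u t z) x) ^ 2 = 1) ∧
    (∀ t : ℝ, 1 < t →
      sSup {r : ℝ | ∃ x : ℝ, 0 ≤ x ∧ r = |u t x|} = t - 1) ∧
    Filter.Tendsto (fun t => sSup {r : ℝ | ∃ x : ℝ, 0 ≤ x ∧ r = |u t x|})
      (nhdsWithin 1 (Set.Ioi 1)) (nhds 0) := by
  obtain rfl : u = rampSolution := funext₂ hu
  have hsup : ∀ t : ℝ, 1 < t →
      sSup {r : ℝ | ∃ x : ℝ, 0 ≤ x ∧ r = |rampSolution t x|} = t - 1 :=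
    fun t ht => (isGreatest_abs_rampSolution ht).csSup_eq
  refine ⟨fun _ _ => rampSolution_solves,
    fun t ht => energy_rampSolution ht.ne', hsup, ?_⟩
  have hlim : Tendsto (fun t : ℝ => t - 1) (𝓝[>] 1) (𝓝 0) :=
    tendsto_sub_nhds_zero_iff.mpr (tendsto_id.mono_left nhdsWithin_le_nhds)
  exact hlim.congr' (eventually_nhdsWithin_of_forall fun t ht => (hsup t ht).symm)
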